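/- Let P be a regular partition of K_{m_1(n_1),m_2(n_2)} such that τ(P) is asymmetric, let G be a connected component of τ'(P) containing at least one edge, define p by |V(G)| = n_1·|E(G)|/2 + p, and define j* ≥ -1 and k* ≥ 0 by 2p + μ(G) = |E(G)|·Σ_{i=0}^{j*} C(m_2,i) + k*, where either 0 ≤ k* < |E(G)|·C(m_2,j*+1), or k* = 0 and j* = m_2. Then w(G) ≤ m_2·(n_1·|E(G)|/2 - p - μ(G)) + |E(G)|·Σ_{i=0}^{j*} (m_2-i)·C(m_2,i) + (m_2-j*-1)·k* - d(G). -/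

import Mathlib

/-- Vertex type of the complete multipartite graph with `m1` parts of size `n1`
and `m2` parts of size `n2`.  The parts of size `n2` are indexed by `Fin m2`
(these play the role of `X_1, …, X_{m2}` in the paper). -/
abbrev MPV (m1 n1 m2 n2 : ℕ) : Type :=
  (Fin m1 × Fin n1) ⊕ (Fin m2 × Fin n2)

/-- The part (maximal independent set) containing a vertex. -/
def partOf {m1 n1 m2 n2 : ℕ} (v : MPV m1 n1 m2 n2) : Fin m1 ⊕ Fin m2 :=
  Sum.map Prod.fst Prod.fst v

/-- The complete multipartite graph `K_{m1(n1), m2(n2)}`. -/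
def KMP (m1 n1 m2 n2 : ℕ) : SimpleGraph (MPV m1 n1 m2 n2) :=
  SimpleGraph.comap partOf ⊤

/-- `P` is a regular partition: a partition of the vertex set each of whose parts
meets each maximal independent set in at most one vertex. -/
def IsRegularPartition {m1 n1 m2 n2 : ℕ} (P : Set (Set (MPV m1 n1 m2 n2))) : Prop :=
  Setoid.IsPartition P ∧
    ∀ p ∈ P, ∀ i : Fin m1 ⊕ Fin m2, {v | v ∈ p ∧ partOf v = i}.Subsingleton

/-- The incidence relation of the hypergraph `τ(P)`: its vertices are the parts of `P`,
its edges are the maximal independent sets, and a part is incident to a maximal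
independent set iff they intersect (for a regular partition, iff they intersect in
exactly one vertex). -/
def tauInc {m1 n1 m2 n2 : ℕ} (P : Set (Set (MPV m1 n1 m2 n2))) :
    ↥P → (Fin m1 ⊕ Fin m2) → Prop :=
  fun p i => ∃ v ∈ p.1, partOf v = i

/-- A hypergraph, given by its incidence relation, is asymmetric: its only
automorphism (pair of permutations of vertices and edges preserving incidence)
is the identity. -/
def HypAsymmetric {Vh Eh : Type*} (I : Vh → Eh → Prop) : Prop :=
  ∀ (σ : Equiv.Perm Vh) (τ : Equiv.Perm Eh),
    (∀ v e, I v e ↔ I (σ v) (τ e)) → σ = 1 ∧ τ = 1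

variable {m1 n1 m2 n2 : ℕ}

/-- Incidence of the hypergraph `τ'(P)`: only the `m1` edges of size `n1` are kept. -/
def tauInc' (P : Set (Set (MPV m1 n1 m2 n2))) (p : ↥P) (j : Fin m1) : Prop :=
  tauInc P p (Sum.inl j)

/-- The label of a vertex of `τ'(P)`: the set of indices `i ≤ m2` with the vertex
incident to the `n2`-edge `X_i`. -/
def labelOf (P : Set (Set (MPV m1 n1 m2 n2))) (p : ↥P) : Set (Fin m2) :=
  {i | tauInc P p (Sum.inr i)}

/-- The weight of a vertex of `τ'(P)`: the cardinality of its label. -/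
noncomputable def wtv (P : Set (Set (MPV m1 n1 m2 n2))) (p : ↥P) : ℕ :=
  (labelOf P p).ncard

/-- The degree of a vertex in `τ'(P)`. -/
noncomputable def degE (P : Set (Set (MPV m1 n1 m2 n2))) (p : ↥P) : ℕ :=
  {j : Fin m1 | tauInc' P p j}.ncard

/-- The incidence (bipartite) graph of `τ'(P)`, used to speak about its connected
components. -/
def incTG (P : Set (Set (MPV m1 n1 m2 n2))) : SimpleGraph (↥P ⊕ Fin m1) :=
  SimpleGraph.fromRel (fun a b => ∃ p j, a = Sum.inl p ∧ b = Sum.inr j ∧ tauInc' P p j)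

/-- The vertex set of a connected component of `τ'(P)`. -/
def compV (P : Set (Set (MPV m1 n1 m2 n2))) (c : (incTG P).ConnectedComponent) :
    Set ↥P :=
  {p | (incTG P).connectedComponentMk (Sum.inl p) = c}

/-- The edge set of a connected component of `τ'(P)`. -/
def compE (P : Set (Set (MPV m1 n1 m2 n2))) (c : (incTG P).ConnectedComponent) :
    Set (Fin m1) :=
  {j | (incTG P).connectedComponentMk (Sum.inr j) = c}

/-- The weight `w(G)` of a connected component `G` of `τ'(P)`. -/
noncomputable def wComp (P : Set (Set (MPV m1 n1 m2 n2)))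
    (c : (incTG P).ConnectedComponent) : ℕ :=
  ∑ᶠ p ∈ compV P c, wtv P p

/-- `μ(G) = Σ_{v : deg v > 2} (deg v - 2)` for a component `G` of `τ'(P)`. -/
noncomputable def muComp (P : Set (Set (MPV m1 n1 m2 n2)))
    (c : (incTG P).ConnectedComponent) : ℕ :=
  ∑ᶠ p ∈ compV P c, (degE P p - 2)

/-- `deg_1(e)`: the number of degree-1 vertices of the edge `e` of `τ'(P)`. -/
noncomputable def deg1E (P : Set (Set (MPV m1 n1 m2 n2))) (e : Fin m1) : ℕ :=
  {p | tauInc' P p e ∧ degE P p = 1}.ncard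

/-- The total weight of the degree-1 vertices of the edge `e` of `τ'(P)`. -/
noncomputable def wSE (P : Set (Set (MPV m1 n1 m2 n2))) (e : Fin m1) : ℕ :=
  ∑ᶠ p ∈ {p | tauInc' P p e ∧ degE P p = 1}, wtv P p

/-- `Σ_{i=0}^{t-1} C(m,i)`. -/
def binPartial (m t : ℕ) : ℕ :=
  ∑ i ∈ Finset.range t, Nat.choose m i

/-- The largest `t` (with `t = j' + 1` in the notation of the paper) such that
`Σ_{i=0}^{t-1} C(m,i) ≤ y`. -/
def wBt (m y : ℕ) : ℕ :=
  Nat.findGreatest (fun t => binPartial m t ≤ y) (m + 1)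

/-- The quantity `w_y`: writing `y = Σ_{i=0}^{j'} C(m,i) + k'` with `j' ≥ -1` and either
`0 ≤ k' < C(m,j'+1)`, or `k' = 0` and `j' = m`, define
`w_y = Σ_{i=0}^{j'} (m-i)·C(m,i) + k'(m-j'-1)`. -/
def wB (m y : ℕ) : ℕ :=
  (∑ i ∈ Finset.range (wBt m y), (m - i) * Nat.choose m i)
    + (y - binPartial m (wBt m y)) * (m - wBt m y)

/-- The number of defects `d(G)` of a component `G` of `τ'(P)`, counted with
multiplicity: each vertex `v` of degree at least `2` contributes `m2 - w(v)`, and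
each edge `e` contributes `w_{deg_1 e}` minus the weight of its degree-1 vertices. -/
noncomputable def dComp (P : Set (Set (MPV m1 n1 m2 n2)))
    (c : (incTG P).ConnectedComponent) : ℕ :=
  (∑ᶠ p ∈ {p ∈ compV P c | 2 ≤ degE P p}, (m2 - wtv P p))
    + ∑ᶠ e ∈ compE P c, (wB m2 (deg1E P e) - wSE P e)

/-!
Split the vertices of `G` into `V₁` (degree one) and `V₂` (degree at least two). A vertex of
`V₂` contributes exactly `m₂` to `w(G) + d(G)`. The degree-one vertices of an edge have pairwise
distinct labels, since two with equal labels could be swapped by an automorphism of `τ(P)`;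
hence `y` of them weigh at most `w_y` (after passing to complements, at most
`Σ_{i ≤ j} C(m₂,i)` of the labels miss at most `j` indices), and together they contribute
exactly `w_y`. The formula defining `w_y` stays an upper bound when evaluated at any level `t`
in place of the level of `y`: as a function of `t` it decreases up to that level and increases
afterwards. Summing over the edges and using the handshake identity
`|V₁| + μ(G) + 2|V₂| = n₁|E(G)|`, i.e. `|V₁| = 2p + μ(G)`, gives the bound.
-/

open Finset

theorem binPartial_succ (m t : ℕ) : binPartial m (t + 1) = binPartial m t + m.choose t :=
  sum_range_succ _ _

theorem binPartial_mono (m : ℕ) : Monotone (binPartial m) := fun _ _ h =>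
  sum_le_sum_of_subset (range_subset_range.2 h)

theorem binPartial_add_one_self (m : ℕ) : binPartial m (m + 1) = 2 ^ m :=
  Nat.sum_range_choose m

theorem binPartial_wBt_le (m y : ℕ) : binPartial m (wBt m y) ≤ y :=
  Nat.findGreatest_spec (P := fun t => binPartial m t ≤ y) (Nat.zero_le _) (Nat.zero_le y)

theorem le_binPartial_of_wBt_le {m y j : ℕ} (hy : y ≤ 2 ^ m) (h : wBt m y ≤ j) :
    y ≤ binPartial m (j + 1) := by
  rcases le_or_gt (j + 1) (m + 1) with hj | hj
  · by_contra! hlt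
    exact Nat.findGreatest_is_greatest (Nat.lt_succ_of_le h) hj hlt.le
  · calc y ≤ binPartial m (m + 1) := (binPartial_add_one_self m).symm ▸ hy
      _ ≤ binPartial m (j + 1) := binPartial_mono m hj.le

theorem Finset.sum_range_le_sum_range_of_sign_change {M : Type*} [AddCommMonoid M]
    [PartialOrder M] [IsOrderedAddMonoid M] {f : ℕ → M} {s : ℕ}
    (hpos : ∀ j < s, 0 ≤ f j) (hneg : ∀ j, s ≤ j → f j ≤ 0) (t : ℕ) :
    ∑ j ∈ range t, f j ≤ ∑ j ∈ range s, f j := by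
  rcases le_total t s with h | h
  · rw [← sum_range_add_sum_Ico f h]
    exact le_add_of_nonneg_right (sum_nonneg fun j hj => hpos j (mem_Ico.1 hj).2)
  · rw [← sum_range_add_sum_Ico f h]
    exact add_le_of_nonpos_right (sum_nonpos fun j hj => hneg j (mem_Ico.1 hj).1)

/-- The formula defining `w_y`, evaluated at an arbitrary level `t` of the decomposition
`y = binPartial m t + k` (so `k` may be negative). -/
def wBAt (m y t : ℕ) : ℚ :=
  ∑ i ∈ range t, ((m : ℚ) - i) * m.choose i + ((m : ℚ) - t) * (y - binPartial m t)

theorem wBAt_eq (m y t : ℕ) :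
    wBAt m y t = m * y - ∑ j ∈ range t, ((y : ℚ) - binPartial m (j + 1)) := by
  induction t with
  | zero => simp [wBAt, binPartial]
  | succ t ih =>
    simp only [wBAt, sum_range_succ, binPartial_succ, Nat.cast_add, Nat.cast_one] at ih ⊢
    linear_combination ih

theorem wB_eq_wBAt {m y : ℕ} (hy : y ≤ 2 ^ m) : (wB m y : ℚ) = wBAt m y (wBt m y) := by
  have hs : wBt m y ≤ m + 1 := Nat.findGreatest_le _
  have hB : binPartial m (wBt m y) ≤ y := binPartial_wBt_le m y
  have hsum : ((∑ i ∈ range (wBt m y), (m - i) * m.choose i : ℕ) : ℚ)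
      = ∑ i ∈ range (wBt m y), ((m : ℚ) - i) * m.choose i := by
    push_cast
    refine sum_congr rfl fun i hi => ?_
    rw [Nat.cast_sub (by grind)]
  rcases hs.lt_or_eq with hlt | heq
  · rw [wB, wBAt, Nat.cast_add, hsum, Nat.cast_mul, Nat.cast_sub hB,
      Nat.cast_sub (Nat.le_of_lt_succ hlt), mul_comm]
  · have hyB : y = binPartial m (wBt m y) := by
      rw [heq, binPartial_add_one_self] at hB ⊢
      omega
    rw [wB, wBAt, Nat.cast_add, hsum, ← hyB]
    simp

theorem wB_le_wBAt {m y : ℕ} (hy : y ≤ 2 ^ m) (t : ℕ) : (wB m y : ℚ) ≤ wBAt m y t := by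
  rw [wB_eq_wBAt hy, wBAt_eq, wBAt_eq, sub_le_sub_iff_left]
  refine sum_range_le_sum_range_of_sign_change (fun j hj => ?_) (fun j hj => ?_) t
  · exact sub_nonneg.2 (mod_cast (binPartial_mono m hj).trans (binPartial_wBt_le m y))
  · exact sub_nonpos.2 (mod_cast le_binPartial_of_wBt_le hy hj)

theorem card_filter_card_le (m j : ℕ) :
    #{T : Finset (Fin m) | T.card ≤ j} = binPartial m (j + 1) := by
  rw [card_eq_sum_card_fiberwise (f := Finset.card) (t := range (j + 1))
    (fun T hT => by simpa [Nat.lt_succ_iff] using hT), binPartial]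
  refine sum_congr rfl fun i hi => ?_
  have hiff : ∀ T : Finset (Fin m), #T ≤ j ∧ #T = i ↔ #T = i := fun T => by grind
  rw [filter_filter]
  simp_rw [hiff]
  rw [← powerset_univ, ← powersetCard_eq_filter, card_powersetCard, card_fin]

theorem sum_range_sub_binPartial_le_sum_card (G : Finset (Finset (Fin m))) (t : ℕ) :
    ∑ j ∈ range t, ((#G : ℚ) - binPartial m (j + 1)) ≤ ∑ T ∈ G, (#T : ℚ) := by
  have hlayer : ∀ j, (#G : ℚ) - binPartial m (j + 1) ≤ #{T ∈ G | j < #T} := by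
    intro j
    have hsplit := card_filter_add_card_filter_not (s := G) (fun T => #T ≤ j)
    have hsmall : #{T ∈ G | #T ≤ j} ≤ binPartial m (j + 1) :=
      card_filter_card_le m j ▸ card_le_card (filter_subset_filter _ (subset_univ G))
    simp only [not_le] at hsplit
    rw [sub_le_iff_le_add]
    have : #G ≤ #{T ∈ G | j < #T} + binPartial m (j + 1) := by omega
    exact_mod_cast this
  calc ∑ j ∈ range t, ((#G : ℚ) - binPartial m (j + 1))
      ≤ ∑ j ∈ range t, (#{T ∈ G | j < #T} : ℚ) := sum_le_sum fun j _ => hlayer j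
    _ = ∑ T ∈ G, (#{j ∈ range t | j < #T} : ℚ) := by
      exact_mod_cast sum_card_bipartiteAbove_eq_sum_card_bipartiteBelow (fun j T => j < #T)
    _ ≤ ∑ T ∈ G, (#T : ℚ) := sum_le_sum fun T _ => by
      exact_mod_cast (card_le_card fun j hj => by simpa using (mem_filter.1 hj).2).trans
        (card_range #T).le

theorem sum_card_le_wB (F : Finset (Finset (Fin m))) : ∑ S ∈ F, #S ≤ wB m #F := by
  have hF : #F ≤ 2 ^ m := by simpa using card_le_univ F
  have hcompl : #(F.image compl) = #F := card_image_of_injective F compl_injective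
  have hsum : ∑ S ∈ F, (#S : ℚ) + ∑ T ∈ F.image compl, (#T : ℚ) = m * #F := by
    rw [sum_image fun _ _ _ _ h => compl_injective h, ← sum_add_distrib]
    simp_rw [← Nat.cast_add, card_add_card_compl]
    simp [mul_comm]
  have hlow := sum_range_sub_binPartial_le_sum_card (F.image compl) (wBt m #F)
  rw [hcompl] at hlow
  have : (∑ S ∈ F, #S : ℚ) ≤ wB m #F := by
    rw [wB_eq_wBAt hF, wBAt_eq]
    linarith
  exact_mod_cast this

theorem HypAsymmetric.eq_of_forall_iff {Vh Eh : Type*} {I : Vh → Eh → Prop}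
    (h : HypAsymmetric I) {v w : Vh} (hvw : ∀ e, I v e ↔ I w e) : v = w := by
  classical
  have hswap : ∀ u e, I u e ↔ I (Equiv.swap v w u) ((1 : Equiv.Perm Eh) e) := by
    intro u e
    rcases eq_or_ne u v with rfl | huv
    · simpa using hvw e
    rcases eq_or_ne u w with rfl | huw
    · simpa using (hvw e).symm
    · simp [Equiv.swap_apply_of_ne_of_ne huv huw]
  simpa using (Equiv.ext_iff.1 (h _ _ hswap).1 v).symm

theorem Setoid.IsPartition.ncard_inter_nonempty {α : Type*} {P : Set (Set α)}
    (hP : Setoid.IsPartition P) {X : Set α} (hX : ∀ p ∈ P, (p ∩ X).Subsingleton) :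
    {p : P | (p.1 ∩ X).Nonempty}.ncard = X.ncard := by
  refine Set.ncard_congr (fun p hp => hp.some) (fun p hp => hp.some_mem.2) ?_ ?_
  · intro p q hp hq hpq
    exact Subtype.ext ((hP.2 _).unique ⟨p.2, hp.some_mem.1⟩ ⟨q.2, hpq ▸ hq.some_mem.1⟩)
  · intro v hv
    obtain ⟨p, ⟨hpP, hvp⟩, -⟩ := hP.2 v
    have hne : ((⟨p, hpP⟩ : P).1 ∩ X).Nonempty := ⟨v, hvp, hv⟩
    exact ⟨⟨p, hpP⟩, hne, hX p hpP hne.some_mem ⟨hvp, hv⟩⟩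

section Component

variable {P : Set (Set (MPV m1 n1 m2 n2))} {c : (incTG P).ConnectedComponent}

def pendant (P : Set (Set (MPV m1 n1 m2 n2))) (e : Fin m1) : Set P :=
  {q | tauInc' P q e ∧ degE P q = 1}

theorem ncard_setOf_tauInc' (hreg : IsRegularPartition P) (e : Fin m1) :
    {q : P | tauInc' P q e}.ncard = n1 := by
  have h := hreg.1.ncard_inter_nonempty (X := {v | partOf v = Sum.inl e})
    fun p hp => hreg.2 p hp _
  have hX : {v : MPV m1 n1 m2 n2 | partOf v = Sum.inl e}
      = Set.range fun a : Fin n1 => Sum.inl (e, a) := by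
    ext v
    rcases v with ⟨j, a⟩ | ⟨j, a⟩ <;> simp [partOf, eq_comm]
  refine h.trans ?_
  rw [hX, Set.ncard_range_of_injective (fun a b h => by simpa using h), Nat.card_fin]

theorem wtv_le (q : P) : wtv P q ≤ m2 :=
  (Set.ncard_le_ncard (Set.subset_univ _)).trans_eq (by simp)

theorem tauInc'_iff_of_degE_eq_one {q : P} {e e' : Fin m1} (hd : degE P q = 1)
    (he : tauInc' P q e) : tauInc' P q e' ↔ e' = e := by
  obtain ⟨a, ha⟩ := Set.ncard_eq_one.1 hd
  have hea : e ∈ ({a} : Set (Fin m1)) := ha ▸ he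
  change e' ∈ {j | tauInc' P q j} ↔ _
  rw [ha, Set.mem_singleton_iff, Set.mem_singleton_iff.1 hea]

theorem exists_tauInc'_of_degE_ne_zero {q : P} (hd : degE P q ≠ 0) : ∃ e, tauInc' P q e :=
  Set.nonempty_of_ncard_ne_zero hd

theorem mem_compV_iff_mem_compE {q : P} {e : Fin m1} (h : tauInc' P q e) :
    q ∈ compV P c ↔ e ∈ compE P c := by
  have hadj : (incTG P).Adj (Sum.inl q) (Sum.inr e) := by
    rw [incTG, SimpleGraph.fromRel_adj]
    exact ⟨by simp, Or.inl ⟨q, e, rfl, rfl, h⟩⟩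
  simp only [compV, compE, Set.mem_ofPred_eq,
    SimpleGraph.ConnectedComponent.sound hadj.reachable]

theorem one_le_degE_of_mem_compV (hne : (compE P c).Nonempty) {q : P} (hq : q ∈ compV P c) :
    1 ≤ degE P q := by
  obtain ⟨e₀, he₀⟩ := hne
  obtain ⟨w⟩ := SimpleGraph.ConnectedComponent.exact (hq.trans he₀.symm)
  -- the first step of a walk from `q` to an edge of the component is an incidence of `q`
  cases w with
  | cons hadj _ =>
    rw [incTG, SimpleGraph.fromRel_adj] at hadj
    obtain ⟨-, ⟨q', j, hq', -, hj⟩ | ⟨-, -, -, ⟨⟩, -⟩⟩ := hadj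
    cases hq'
    exact Nat.one_le_iff_ne_zero.2 (Set.ncard_ne_zero_of_mem hj)

theorem pairwiseDisjoint_pendant (s : Set (Fin m1)) : s.PairwiseDisjoint (pendant P) := by
  intro e _ e' _ hee'
  refine Set.disjoint_left.2 fun q hq hq' => hee' ?_
  exact ((tauInc'_iff_of_degE_eq_one hq.2 hq.1).1 hq'.1).symm

theorem biUnion_pendant_compE :
    ⋃ e ∈ compE P c, pendant P e = {q ∈ compV P c | degE P q = 1} := by
  ext q
  simp only [Set.mem_iUnion, Set.mem_ofPred_eq, pendant, exists_prop]
  constructor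
  · rintro ⟨e, he, hqe, hd⟩
    exact ⟨(mem_compV_iff_mem_compE hqe).2 he, hd⟩
  · rintro ⟨hq, hd⟩
    obtain ⟨e, he⟩ := exists_tauInc'_of_degE_ne_zero (hd ▸ one_ne_zero)
    exact ⟨e, (mem_compV_iff_mem_compE he).1 hq, he, hd⟩

theorem finsum_compV_eq_add {M : Type*} [AddCommMonoid M] (hne : (compE P c).Nonempty)
    (f : P → M) :
    ∑ᶠ q ∈ compV P c, f q
      = ∑ᶠ q ∈ {q ∈ compV P c | degE P q = 1}, f q
        + ∑ᶠ q ∈ {q ∈ compV P c | 2 ≤ degE P q}, f q := by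
  have hunion :
      compV P c = {q ∈ compV P c | degE P q = 1} ∪ {q ∈ compV P c | 2 ≤ degE P q} := by
    ext q
    refine ⟨fun hq => ?_, fun hq => hq.elim (·.1) (·.1)⟩
    rcases (one_le_degE_of_mem_compV hne hq).eq_or_lt with h | h
    exacts [Or.inl ⟨hq, h.symm⟩, Or.inr ⟨hq, h⟩]
  have hdisj : Disjoint {q ∈ compV P c | degE P q = 1} {q ∈ compV P c | 2 ≤ degE P q} :=
    Set.disjoint_left.2 fun q h1 h2 => by have := h1.2; have := h2.2; omega
  conv_lhs => rw [hunion]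
  exact finsum_mem_union hdisj (Set.toFinite _) (Set.toFinite _)

theorem finsum_pendant_compE {M : Type*} [AddCommMonoid M] (f : P → M) :
    ∑ᶠ e ∈ compE P c, ∑ᶠ q ∈ pendant P e, f q
      = ∑ᶠ q ∈ {q ∈ compV P c | degE P q = 1}, f q := by
  rw [← biUnion_pendant_compE, finsum_mem_biUnion (pairwiseDisjoint_pendant _)
    (Set.toFinite _) fun _ _ => Set.toFinite _]

theorem finsum_degE_compV (hreg : IsRegularPartition P) :
    ∑ᶠ q ∈ compV P c, degE P q = n1 * (compE P c).ncard := by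
  classical
  set V := (Set.toFinite (compV P c)).toFinset
  set E := (Set.toFinite (compE P c)).toFinset
  have hdeg : ∀ q ∈ V, #(E.bipartiteAbove (tauInc' P) q) = degE P q := by
    intro q hq
    rw [degE, ← Set.ncard_coe_finset]
    congr 1
    ext e
    simp only [bipartiteAbove, coe_filter, Set.Finite.mem_toFinset, Set.mem_ofPred_eq, E]
    exact ⟨And.right, fun h => ⟨(mem_compV_iff_mem_compE h).1 (by simpa [V] using hq), h⟩⟩
  have hedge : ∀ e ∈ E, #(V.bipartiteBelow (tauInc' P) e) = n1 := by
    intro e he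
    refine Eq.trans ?_ (ncard_setOf_tauInc' hreg e)
    rw [← Set.ncard_coe_finset]
    congr 1
    ext q
    simp only [bipartiteBelow, coe_filter, Set.Finite.mem_toFinset, Set.mem_ofPred_eq, V]
    exact ⟨And.right, fun h => ⟨(mem_compV_iff_mem_compE h).2 (by simpa [E] using he), h⟩⟩
  rw [finsum_mem_eq_finite_toFinset_sum _ (Set.toFinite _), ← sum_congr rfl hdeg,
    sum_card_bipartiteAbove_eq_sum_card_bipartiteBelow, sum_congr rfl hedge, sum_const,
    smul_eq_mul, mul_comm, Set.ncard_eq_toFinset_card _ (Set.toFinite _)]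

theorem ncard_compV_eq_add (hne : (compE P c).Nonempty) :
    (compV P c).ncard
      = {q ∈ compV P c | degE P q = 1}.ncard + {q ∈ compV P c | 2 ≤ degE P q}.ncard := by
  simp only [← finsum_one]
  exact finsum_compV_eq_add hne _

theorem handshake (hreg : IsRegularPartition P) (hne : (compE P c).Nonempty) :
    {q ∈ compV P c | degE P q = 1}.ncard + muComp P c
      + 2 * {q ∈ compV P c | 2 ≤ degE P q}.ncard = n1 * (compE P c).ncard := by
  have hdeg := finsum_degE_compV (c := c) hreg
  rw [finsum_compV_eq_add hne] at hdeg
  rw [muComp, finsum_compV_eq_add hne]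
  set V1 := {q ∈ compV P c | degE P q = 1}
  set V2 := {q ∈ compV P c | 2 ≤ degE P q}
  have hV1 : ∑ᶠ q ∈ V1, degE P q = V1.ncard := by
    rw [← finsum_one]
    exact finsum_mem_congr rfl fun q hq => hq.2
  have hμ : ∑ᶠ q ∈ V1, (degE P q - 2) = 0 :=
    finsum_mem_eq_zero_of_forall_eq_zero fun q hq => by simp [hq.2]
  have hV2 : ∑ᶠ q ∈ V2, degE P q = ∑ᶠ q ∈ V2, (degE P q - 2) + 2 * V2.ncard := by
    rw [← finsum_one, mul_finsum_mem, ← finsum_mem_add_distrib (Set.toFinite _)]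
    exact finsum_mem_congr rfl fun q hq => by have := hq.2; omega
  omega

theorem exists_finset_labels (hasym : HypAsymmetric (tauInc P)) (e : Fin m1) :
    ∃ F : Finset (Finset (Fin m2)), #F = deg1E P e ∧ ∑ S ∈ F, #S = wSE P e := by
  classical
  set D := (Set.toFinite (pendant P e)).toFinset
  set label : P → Finset (Fin m2) := fun q => (Set.toFinite (labelOf P q)).toFinset
  have hinj : Set.InjOn label D := by
    intro q hq r hr hqr
    rw [Set.Finite.coe_toFinset] at hq hr
    refine hasym.eq_of_forall_iff ?_
    rintro (j | i)
    · exact (tauInc'_iff_of_degE_eq_one hq.2 hq.1).trans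
        (tauInc'_iff_of_degE_eq_one hr.2 hr.1).symm
    · simpa [label, labelOf] using congrArg (i ∈ ·) hqr
  refine ⟨D.image label, ?_, ?_⟩
  · rw [card_image_of_injOn hinj, deg1E, Set.ncard_eq_toFinset_card _ (Set.toFinite _)]
    rfl
  · rw [sum_image hinj, wSE, finsum_mem_eq_finite_toFinset_sum _ (Set.toFinite _)]
    exact sum_congr rfl fun q _ => (Set.ncard_eq_toFinset_card _ (Set.toFinite _)).symm

theorem wSE_le_wB (hasym : HypAsymmetric (tauInc P)) (e : Fin m1) :
    wSE P e ≤ wB m2 (deg1E P e) := by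
  obtain ⟨F, hcard, hsum⟩ := exists_finset_labels hasym e
  exact hsum ▸ hcard ▸ sum_card_le_wB F

theorem deg1E_le_two_pow (hasym : HypAsymmetric (tauInc P)) (e : Fin m1) :
    deg1E P e ≤ 2 ^ m2 := by
  obtain ⟨F, hcard, -⟩ := exists_finset_labels hasym e
  simpa [hcard] using card_le_univ F

theorem wComp_add_dComp (hasym : HypAsymmetric (tauInc P)) (hne : (compE P c).Nonempty) :
    wComp P c + dComp P c
      = m2 * {q ∈ compV P c | 2 ≤ degE P q}.ncard
        + ∑ᶠ e ∈ compE P c, wB m2 (deg1E P e) := by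
  rw [dComp]
  set V2 := {q ∈ compV P c | 2 ≤ degE P q}
  have hV2 : ∑ᶠ q ∈ V2, wtv P q + ∑ᶠ q ∈ V2, (m2 - wtv P q) = m2 * V2.ncard := by
    rw [← finsum_mem_add_distrib (Set.toFinite _), ← finsum_one, mul_finsum_mem, mul_one]
    exact finsum_mem_congr rfl fun q _ => Nat.add_sub_cancel' (wtv_le q)
  have hE : ∑ᶠ e ∈ compE P c, wSE P e + ∑ᶠ e ∈ compE P c, (wB m2 (deg1E P e) - wSE P e)
      = ∑ᶠ e ∈ compE P c, wB m2 (deg1E P e) := by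
    rw [← finsum_mem_add_distrib (Set.toFinite _)]
    exact finsum_mem_congr rfl fun e _ => Nat.add_sub_cancel' (wSE_le_wB hasym e)
  have hw : wComp P c = ∑ᶠ e ∈ compE P c, wSE P e + ∑ᶠ q ∈ V2, wtv P q := by
    rw [wComp, finsum_compV_eq_add hne, ← finsum_pendant_compE]
    rfl
  rw [hw]
  omega

theorem finsum_wB_le (hasym : HypAsymmetric (tauInc P)) (t : ℕ) :
    (∑ᶠ e ∈ compE P c, (wB m2 (deg1E P e) : ℚ))
      ≤ (compE P c).ncard * ∑ i ∈ range t, ((m2 : ℚ) - i) * m2.choose i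
        + ((m2 : ℚ) - t) * ({q ∈ compV P c | degE P q = 1}.ncard
          - (compE P c).ncard * ∑ i ∈ range t, (m2.choose i : ℚ)) := by
  have hV1 : ({q ∈ compV P c | degE P q = 1}.ncard : ℚ)
      = ∑ᶠ e ∈ compE P c, (deg1E P e : ℚ) := by
    rw [← Nat.cast_finsum_mem (Set.toFinite _), ← finsum_one, ← finsum_pendant_compE]
    simp only [finsum_one, deg1E, pendant]
  rw [hV1, finsum_mem_eq_finite_toFinset_sum _ (Set.toFinite _),
    finsum_mem_eq_finite_toFinset_sum _ (Set.toFinite _),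
    Set.ncard_eq_toFinset_card _ (Set.toFinite _)]
  calc ∑ e ∈ (Set.toFinite _).toFinset, (wB m2 (deg1E P e) : ℚ)
      ≤ ∑ e ∈ (Set.toFinite (compE P c)).toFinset, wBAt m2 (deg1E P e) t :=
        sum_le_sum fun e _ => wB_le_wBAt (deg1E_le_two_pow hasym e) t
    _ = _ := by
      simp only [wBAt, binPartial, sum_add_distrib, ← mul_sum, sum_sub_distrib, sum_const,
        nsmul_eq_mul, Nat.cast_sum]

end Component

theorem weight_component_bound_global_general
    (m1 n1 m2 n2 : ℕ) (P : Set (Set (MPV m1 n1 m2 n2)))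
    (hreg : IsRegularPartition P) (hasym : HypAsymmetric (tauInc P))
    (c : (incTG P).ConnectedComponent) (hne : (compE P c).Nonempty)
    (p : ℚ)
    (hp : ((compV P c).ncard : ℚ) = n1 * (compE P c).ncard / 2 + p)
    (t kst : ℕ)
    (hjk : 2 * p + (muComp P c : ℚ)
      = (compE P c).ncard * (∑ i ∈ Finset.range t, (Nat.choose m2 i : ℚ)) + kst) :
    (wComp P c : ℚ)
      ≤ m2 * (n1 * (compE P c).ncard / 2 - p - muComp P c)
        + (compE P c).ncard * (∑ i ∈ Finset.range t, ((m2 - i : ℚ)) * Nat.choose m2 i)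
        + ((m2 : ℚ) - t) * kst
        - dComp P c := by
  set V1 := {q ∈ compV P c | degE P q = 1}
  set V2 := {q ∈ compV P c | 2 ≤ degE P q}
  have hwd : (wComp P c : ℚ) + dComp P c
      = m2 * V2.ncard + ∑ᶠ e ∈ compE P c, (wB m2 (deg1E P e) : ℚ) := by
    rw [← Nat.cast_finsum_mem (Set.toFinite _)]
    exact_mod_cast wComp_add_dComp hasym hne
  have hhand : (V1.ncard : ℚ) + muComp P c + 2 * V2.ncard = n1 * (compE P c).ncard := by
    exact_mod_cast handshake hreg hne
  have hV : ((compV P c).ncard : ℚ) = V1.ncard + V2.ncard := by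
    exact_mod_cast ncard_compV_eq_add hne
  have hV2 : (n1 * (compE P c).ncard / 2 - p - muComp P c : ℚ) = V2.ncard := by linarith
  have hV1 : (V1.ncard : ℚ) - (compE P c).ncard * ∑ i ∈ Finset.range t, (m2.choose i : ℚ)
      = kst := by linarith
  have hwB := finsum_wB_le (c := c) hasym t
  rw [hV1] at hwB
  rw [hV2]
  linarith

/-- **Lemma 4.5.** Global weight bound for a connected component `G` of `τ'(P)` with at
least one edge: with `p` defined by `|V(G)| = n1·|E(G)|/2 + p` and `j* ≥ -1`, `k* ≥ 0`
(here `t = j* + 1`) defined by `2p + μ(G) = |E(G)|·Σ_{i=0}^{j*} C(m2,i) + k*` with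
either `0 ≤ k* < |E(G)|·C(m2,j*+1)` or `k* = 0 ∧ j* = m2`, one has
`w(G) ≤ m2(n1|E(G)|/2 - p - μ(G)) + |E(G)|·Σ_{i=0}^{j*}(m2-i)C(m2,i) + (m2-j*-1)k* - d(G)`. -/
theorem weight_component_bound_global
    (m1 n1 m2 n2 : ℕ) (P : Set (Set (MPV m1 n1 m2 n2)))
    (hreg : IsRegularPartition P) (hasym : HypAsymmetric (tauInc P))
    (c : (incTG P).ConnectedComponent) (hne : (compE P c).Nonempty)
    (p : ℚ)
    (hp : ((compV P c).ncard : ℚ) = n1 * (compE P c).ncard / 2 + p)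
    (t kst : ℕ)
    (hjk : 2 * p + (muComp P c : ℚ)
      = (compE P c).ncard * (∑ i ∈ Finset.range t, (Nat.choose m2 i : ℚ)) + kst)
    (hcond : kst < (compE P c).ncard * Nat.choose m2 t ∨ (kst = 0 ∧ t = m2 + 1)) :
    (wComp P c : ℚ)
      ≤ m2 * (n1 * (compE P c).ncard / 2 - p - muComp P c)
        + (compE P c).ncard * (∑ i ∈ Finset.range t, ((m2 - i : ℚ)) * Nat.choose m2 i)
        + ((m2 : ℚ) - t) * kst
        - dComp P c :=
  weight_component_bound_global_general m1 n1 m2 n2 P hreg hasym c hne p hp t kst hjk
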